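/- Suppose char(𝕜) ∉ {2, 3}. Let n = 2, let μ be the multiplicatively antisymmetric matrix with μ 1 1 = μ 2 2 = 1, μ 1 2 = 2 and μ 2 1 = 1/2, and let B be the μ-symmetric matrix with B 1 1 = B 1 2 = B 2 1 = 0 and B 2 2 = 1. Then B is a symmetric matrix, but the skew Clifford algebra sCl(μ, B) has 𝕜-vector-space dimension 2 (in particular, x̄_1 = 0 in sCl(μ, B), so the converse of Corollary 3.11 fails). (Example 3.15.) -/

import Mathlib

open FreeAlgebra

/-- `μ` is multiplicatively antisymmetric: `μ i j * μ j i = 1` and `μ i i = 1`. -/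
def MulAntisym {𝕜 : Type*} [Field 𝕜] {n : ℕ} (μ : Fin n → Fin n → 𝕜) : Prop :=
  ∀ i j, μ i j * μ j i = 1 ∧ μ i i = 1

/-- `B` is `μ`-symmetric: `B i j = μ i j * B j i`. -/
def MuSymm {𝕜 : Type*} [Field 𝕜] {n : ℕ} (μ B : Fin n → Fin n → 𝕜) : Prop :=
  ∀ i j, B i j = μ i j * B j i

/-- Condition (★): for all `i, j` with `B i j ≠ 0`, one has `μ i k = μ k j` for all `k`. -/
def StarCond {𝕜 : Type*} [Field 𝕜] {n : ℕ} (μ B : Fin n → Fin n → 𝕜) : Prop :=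
  ∀ i j, B i j ≠ 0 → ∀ k, μ i k = μ k j

/-- The defining relations of the skew Clifford algebra: identifying
`x_i x_j + μ i j • (x_j x_i)` with `(2 * B i j) • 1`, which amounts to quotienting the free
algebra by the two-sided ideal generated by
`x_i x_j + μ i j • (x_j x_i) - (2 * B i j) • 1`. -/
inductive sClRel (𝕜 : Type*) [Field 𝕜] (n : ℕ) (μ B : Fin n → Fin n → 𝕜) :
    FreeAlgebra 𝕜 (Fin n) → FreeAlgebra 𝕜 (Fin n) → Prop
  | rel (i j : Fin n) : sClRel 𝕜 n μ B
      (ι 𝕜 i * ι 𝕜 j + μ i j • (ι 𝕜 j * ι 𝕜 i))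
      ((2 * B i j) • (1 : FreeAlgebra 𝕜 (Fin n)))

/-- The skew Clifford algebra `sCl(μ, B)`. -/
abbrev sCl (𝕜 : Type*) [Field 𝕜] (n : ℕ) (μ B : Fin n → Fin n → 𝕜) : Type _ :=
  RingQuot (sClRel 𝕜 n μ B)

/-- The image `x̄_i` of the generator `x_i` in the skew Clifford algebra. -/
noncomputable def sClGen (𝕜 : Type*) [Field 𝕜] (n : ℕ) (μ B : Fin n → Fin n → 𝕜)
    (i : Fin n) : sCl 𝕜 n μ B :=
  RingQuot.mkAlgHom 𝕜 (sClRel 𝕜 n μ B) (ι 𝕜 i)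

/-! Multiplying the relation `x̄₀ x̄₁ + 2 x̄₁ x̄₀ = 0` by `x̄₁` on either side and using
`x̄₁² = 1` gives `x̄₀ = 4 x̄₀`, so `x̄₀ = 0` once `3 ≠ 0` (Lean's `x̄₀, x̄₁` are the paper's
`x̄_1, x̄_2`). Hence `sCl(μ, B)` is spanned by `1` and `x̄₁`, and the character `x̄₀ ↦ 0`,
`x̄₁ ↦ (1, -1)` to `𝕜 × 𝕜` shows that these two are linearly independent. -/

namespace sCl

variable {𝕜 : Type*} [Field 𝕜] {n : ℕ} {μ B : Fin n → Fin n → 𝕜}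

theorem sClGen_mul_add_smul_mul (i j : Fin n) :
    sClGen 𝕜 n μ B i * sClGen 𝕜 n μ B j + μ i j • (sClGen 𝕜 n μ B j * sClGen 𝕜 n μ B i) =
      (2 * B i j) • 1 := by
  simpa only [sClGen, map_add, map_mul, map_smul, map_one] using
    RingQuot.mkAlgHom_rel 𝕜 (sClRel.rel (μ := μ) (B := B) i j)

theorem adjoin_range_sClGen : Algebra.adjoin 𝕜 (Set.range (sClGen 𝕜 n μ B)) = ⊤ := by
  rw [show sClGen 𝕜 n μ B = RingQuot.mkAlgHom 𝕜 (sClRel 𝕜 n μ B) ∘ ι 𝕜 from rfl,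
    Set.range_comp, Algebra.adjoin_image, adjoin_range_ι, Algebra.map_top,
    AlgHom.range_eq_top]
  exact RingQuot.mkAlgHom_surjective 𝕜 _

variable {A : Type*} [Ring A] [Algebra 𝕜 A]

noncomputable def lift (a : Fin n → A)
    (ha : ∀ i j, a i * a j + μ i j • (a j * a i) = (2 * B i j) • 1) : sCl 𝕜 n μ B →ₐ[𝕜] A :=
  RingQuot.liftAlgHom 𝕜 ⟨FreeAlgebra.lift 𝕜 a, by
    rintro _ _ ⟨i, j⟩
    simp only [map_add, map_mul, map_smul, map_one, lift_ι_apply, ha]⟩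

@[simp]
theorem lift_sClGen (a : Fin n → A)
    (ha : ∀ i j, a i * a j + μ i j • (a j * a i) = (2 * B i j) • 1) (i : Fin n) :
    lift a ha (sClGen 𝕜 n μ B i) = a i := by
  rw [lift, sClGen, RingQuot.liftAlgHom_mkAlgHom_apply, lift_ι_apply]

end sCl

section

variable {K A : Type*} [Field K] [Ring A] [Algebra K A]

theorem eq_zero_of_mul_add_smul_mul_eq_zero {x y : A} {c : K} (hc : c ^ 2 ≠ 1)
    (hy : y * y = 1) (h : x * y + c • (y * x) = 0) : x = 0 := by
  have hright : x + c • (y * x * y) = 0 := by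
    simpa only [add_mul, smul_mul_assoc, mul_assoc, hy, mul_one, zero_mul] using
      congrArg (· * y) h
  have hleft : y * x * y + c • x = 0 := by
    simpa only [mul_add, mul_smul_comm, ← mul_assoc, hy, one_mul, mul_zero] using
      congrArg (y * ·) h
  have hsq : (c ^ 2 - 1) • x = 0 := by
    linear_combination (norm := module) c • hleft - hright
  exact (smul_eq_zero.mp hsq).resolve_left (sub_ne_zero.mpr hc)

theorem adjoin_le_span_one_of_mul_self_eq_one {s : Set A} {y : A} (hy : y * y = 1)
    (hs : s ⊆ Submodule.span K {1, y}) :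
    Subalgebra.toSubmodule (Algebra.adjoin K s) ≤ Submodule.span K {1, y} := by
  have hmul : Submodule.span K {1, y} * Submodule.span K {1, y} ≤ Submodule.span K {1, y} := by
    rw [Submodule.span_mul_span, Submodule.span_le, Set.mul_subset_iff]
    rintro a (rfl | rfl) b (rfl | rfl) <;>
      simp only [one_mul, mul_one, hy] <;> apply Submodule.subset_span <;> simp
  let S := (Submodule.span K {1, y}).toSubalgebra (Submodule.subset_span (by simp))
    fun a b ha hb ↦ hmul (Submodule.mul_mem_mul ha hb)
  exact Algebra.adjoin_le (S := S) hs

end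

section Example

variable (𝕜 : Type*) [Field 𝕜]

abbrev exampleMu : Fin 2 → Fin 2 → 𝕜 := ![![1, 2], ![2⁻¹, 1]]

abbrev exampleB : Fin 2 → Fin 2 → 𝕜 := ![![0, 0], ![0, 1]]

local notation "x̄" => sClGen 𝕜 2 (exampleMu 𝕜) (exampleB 𝕜)

variable {𝕜}

theorem exampleGen_one_mul_self (h2 : (2 : 𝕜) ≠ 0) : x̄ 1 * x̄ 1 = 1 := by
  have h : (2 : 𝕜) • (x̄ 1 * x̄ 1) = (2 : 𝕜) • 1 := by
    simpa [two_smul] using sCl.sClGen_mul_add_smul_mul (μ := exampleMu 𝕜) (B := exampleB 𝕜) 1 1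
  exact smul_right_injective _ h2 h

theorem exampleGen_zero_eq_zero (h2 : (2 : 𝕜) ≠ 0) (h3 : (3 : 𝕜) ≠ 0) : x̄ 0 = 0 := by
  refine eq_zero_of_mul_add_smul_mul_eq_zero (c := (2 : 𝕜)) ?_ (exampleGen_one_mul_self h2) ?_
  · intro hsq
    exact h3 (by linear_combination hsq)
  · simpa using sCl.sClGen_mul_add_smul_mul (μ := exampleMu 𝕜) (B := exampleB 𝕜) 0 1

noncomputable def exampleToProd : sCl 𝕜 2 (exampleMu 𝕜) (exampleB 𝕜) →ₐ[𝕜] 𝕜 × 𝕜 :=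
  sCl.lift ![0, (1, -1)] (by
    intro i j
    fin_cases i <;> fin_cases j <;> simp [Prod.ext_iff]; norm_num)

theorem linearIndependent_one_exampleGen (h2 : (2 : 𝕜) ≠ 0) :
    LinearIndependent 𝕜 ![1, x̄ 1] := by
  refine LinearIndependent.of_comp (exampleToProd (𝕜 := 𝕜)).toLinearMap ?_
  have hcomp : exampleToProd.toLinearMap ∘ ![1, x̄ 1] = ![((1 : 𝕜), (1 : 𝕜)), (1, -1)] := by
    ext i : 1
    fin_cases i <;> simp [exampleToProd, Prod.ext_iff]
  rw [hcomp, LinearIndependent.pair_iff]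
  intro s t hst
  simp only [Prod.ext_iff, Prod.smul_mk, Prod.fst_add, Prod.snd_add, Prod.fst_zero,
    Prod.snd_zero, smul_eq_mul] at hst
  obtain ⟨hsum, hdiff⟩ := hst
  have hs : s = 0 := (mul_eq_zero.mp (by linear_combination hsum + hdiff)).resolve_left h2
  exact ⟨hs, by linear_combination hsum - hs⟩

theorem span_one_exampleGen_eq_top (h2 : (2 : 𝕜) ≠ 0) (h3 : (3 : 𝕜) ≠ 0) :
    Submodule.span 𝕜 (Set.range ![1, x̄ 1]) = ⊤ := by
  rw [eq_top_iff, ← Algebra.top_toSubmodule, ← sCl.adjoin_range_sClGen,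
    show Set.range ![1, x̄ 1] = {1, x̄ 1} by simp [Set.pair_comm]]
  refine adjoin_le_span_one_of_mul_self_eq_one (exampleGen_one_mul_self h2) ?_
  rintro _ ⟨i, rfl⟩
  fin_cases i
  · simp [exampleGen_zero_eq_zero h2 h3]
  · exact Submodule.subset_span (by simp)

end Example

/-- Example 3.15: if `char 𝕜 ∉ {2, 3}`, with `μ = [[1,2],[1/2,1]]` and `B = [[0,0],[0,1]]`,
the matrix `B` is symmetric but `sCl(μ, B)` has dimension `2`; in particular `x̄_1 = 0`,
so the converse of Corollary 3.11 fails. -/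
theorem example_symmetric_B_not_full_dimension
    (𝕜 : Type*) [Field 𝕜] (hchar2 : (2 : 𝕜) ≠ 0) (hchar3 : (3 : 𝕜) ≠ 0) :
    (∀ i j, (![![0, 0], ![0, 1]] : Fin 2 → Fin 2 → 𝕜) i j = ![![0, 0], ![0, 1]] j i) ∧
    Module.finrank 𝕜 (sCl 𝕜 2 ![![1, 2], ![2⁻¹, 1]] ![![0, 0], ![0, 1]]) = 2 ∧
    sClGen 𝕜 2 ![![1, 2], ![2⁻¹, 1]] ![![0, 0], ![0, 1]] 0 = 0 := by
  let basis := Module.Basis.mk (linearIndependent_one_exampleGen hchar2)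
    (span_one_exampleGen_eq_top hchar2 hchar3).ge
  refine ⟨?_, ?_, exampleGen_zero_eq_zero hchar2 hchar3⟩
  · intro i j
    fin_cases i <;> fin_cases j <;> rfl
  · rw [Module.finrank_eq_card_basis basis, Fintype.card_fin]
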